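/- Let R be one of the fields ℚ, ℝ, or ℂ and let H(t) = 1 + r_1 t + r_2 t² + ⋯ ∈ R[[t]] be 2-algebraically rigid. Then F_H satisfies the Riccati equation F_H′(t) = −F_H(t)² + h_1·F_H(t) + (h_2 − h_1²) as formal Laurent series, where h_1 = [H²]_1, h_2 = [H³]_2, and F_H′ is the termwise derivative of F_H. -/

import Mathlib

noncomputable section

namespace RigidGenus

variable {R : Type*} [Field R]

/-- Termwise substitution `t ↦ w·t` on Laurent series: the coefficient of `t^k`
is multiplied by `w^k`. -/
def zscale (w : R) (f : LaurentSeries R) : LaurentSeries R where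
  coeff k := w ^ k * f.coeff k
  isPWO_support' := f.isPWO_support'.mono (fun k hk => by
    simp only [Function.mem_support, ne_eq] at hk ⊢
    exact fun h => hk (by rw [h, mul_zero]))

/-- Termwise derivative of a Laurent series: `(∑ f_k t^k)' = ∑ k f_k t^(k-1)`. -/
def lderiv (f : LaurentSeries R) : LaurentSeries R where
  coeff k := ((k + 1 : ℤ) : R) * f.coeff (k + 1)
  isPWO_support' := by
    have himg : ((fun k : ℤ => k - 1) '' (Function.support f.coeff)).IsPWO :=
      f.isPWO_support'.image_of_monotone (fun a b h => sub_le_sub_right h 1)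
    refine himg.mono (fun k hk => ?_)
    simp only [Function.mem_support, ne_eq] at hk
    exact ⟨k + 1, fun h => hk (by rw [h, mul_zero]), by ring⟩

/-- `F_H = H(t)/t`, as a formal Laurent series. -/
def FH (H : PowerSeries R) : LaurentSeries R :=
  HahnSeries.single (-1 : ℤ) (1 : R) * HahnSeries.ofPowerSeries ℤ R H

/-- `S_H(w_0,…,w_n;t) = ∑_i ∏_{j ≠ i} F_H((w_j - w_i) t)`. -/
def SH (H : PowerSeries R) {n : ℕ} (w : Fin (n + 1) → ℤ) : LaurentSeries R :=
  ∑ i : Fin (n + 1), ∏ j ∈ Finset.univ.erase i, zscale ((w j - w i : ℤ) : R) (FH H)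

/-- `H` is `n`-algebraically rigid: for all `1 ≤ m ≤ n` and pairwise distinct
integers `w_0, …, w_m`, the Laurent series `S_H(w_0,…,w_m;t)` is constant. -/
def AlgRigid (H : PowerSeries R) (n : ℕ) : Prop :=
  ∀ m : ℕ, 1 ≤ m → m ≤ n → ∀ w : Fin (m + 1) → ℤ, Function.Injective w →
    ∀ k : ℤ, k ≠ 0 → (SH H w).coeff k = 0

/-- The formal exponential series `exp (a t)`. -/
def expS (a : R) : PowerSeries R := PowerSeries.mk fun n => a ^ n / n.factorial

/-- The formal sine series `sin (a t)`. -/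
def sinS (a : R) : PowerSeries R :=
  PowerSeries.mk fun n => if n % 2 = 1 then (-1 : R) ^ (n / 2) * a ^ n / n.factorial else 0

/-- The formal cosine series `cos (a t)`. -/
def cosS (a : R) : PowerSeries R :=
  PowerSeries.mk fun n => if n % 2 = 0 then (-1 : R) ^ (n / 2) * a ^ n / n.factorial else 0

/-- `H = D_{a,b}`, the generalized Todd series `t(a·coth(at)+b)`: for `a ≠ 0` it is
characterized by `D_{a,b}(t)·(e^{at} - e^{-at}) = t·(a(e^{at}+e^{-at}) + b(e^{at}-e^{-at}))`,
and `D_{0,b}(t) = 1 + bt`. -/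
def IsDab (a b : R) (H : PowerSeries R) : Prop :=
  (a ≠ 0 ∧ H * (expS a - expS (-a)) =
      PowerSeries.X * (PowerSeries.C a * (expS a + expS (-a)) +
        PowerSeries.C b * (expS a - expS (-a)))) ∨
  (a = 0 ∧ H = 1 + PowerSeries.C b * PowerSeries.X)

/-- `H = G_{a,b}`, the series `t(a·cot(at)+b)`: for `a ≠ 0` it is characterized by
`G_{a,b}(t)·sin(at) = t·(a·cos(at) + b·sin(at))`, and `G_{0,b}(t) = 1 + bt`. -/
def IsGab (a b : R) (H : PowerSeries R) : Prop :=
  (a ≠ 0 ∧ H * sinS a =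
      PowerSeries.X * (PowerSeries.C a * cosS a + PowerSeries.C b * sinS a)) ∨
  (a = 0 ∧ H = 1 + PowerSeries.C b * PowerSeries.X)

/-!
Write `r_n` for the coefficients of `H`. Multiplied by `t²`, the Riccati equation for `F_H = H/t`
becomes the power series identity `t H' - H = -H² + h₁ t H + (h₂ - h₁²) t²`; in degrees `≤ 2`
this is the definition of `h₁, h₂`, and in degree `n ≥ 3` it reads
`(n - 1) r_n = -[H²]_n + 2 r₁ r_{n-1}`.

Rigidity with `w = (0, 1)` says that `F_H(t) + F_H(-t)` is constant, so `r_n = 0` for odd `n ≥ 3`.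
Rigidity with `w = (0, x, x + 1)`, `x = 1, 2, …`, says that `x (x + 1)` times the coefficient of
`t^(n-2)` in `S_H`, a polynomial in `x`, has infinitely many roots; hence it vanishes, and its
coefficient of `x^n` gives `[H²]_n + (-1)^n ((n - 1) r_n r₀ + 2 r_{n-1} r₁) = 0`. By parity, either
`r_n` or `r_{n-1}` vanishes, and this is the recursion above.
-/

open Finset Polynomial

@[simp] lemma coeff_zscale (w : R) (f : LaurentSeries R) (k : ℤ) :
    (zscale w f).coeff k = w ^ k * f.coeff k := rfl

@[simp] lemma coeff_lderiv (f : LaurentSeries R) (k : ℤ) :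
    (lderiv f).coeff k = ((k + 1 : ℤ) : R) * f.coeff (k + 1) := rfl

lemma coeff_single_mul_coe_add (d : ℤ) (c : R) (φ : PowerSeries R) (n : ℕ) :
    (HahnSeries.single d c * (φ : LaurentSeries R)).coeff (d + n)
      = c * PowerSeries.coeff n φ := by
  rw [add_comm, HahnSeries.coeff_single_mul_add, LaurentSeries.coeff_coe_powerSeries]

lemma coeff_single_mul_coe_of_lt {d k : ℤ} (c : R) (φ : PowerSeries R) (h : k < d) :
    (HahnSeries.single d c * (φ : LaurentSeries R)).coeff k = 0 := by
  rw [← sub_add_cancel k d, HahnSeries.coeff_single_mul_add, PowerSeries.coeff_coe,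
    if_pos (by omega), mul_zero]

lemma eq_single_mul_coe {f : LaurentSeries R} {d : ℤ} {c : R} {φ : PowerSeries R}
    (hlt : ∀ k < d, f.coeff k = 0)
    (hge : ∀ n : ℕ, f.coeff (d + n) = c * PowerSeries.coeff n φ) :
    f = HahnSeries.single d c * (φ : LaurentSeries R) := by
  ext k
  rcases lt_or_ge k d with h | h
  · rw [hlt k h, coeff_single_mul_coe_of_lt c φ h]
  · obtain ⟨n, rfl⟩ : ∃ n : ℕ, k = d + n := ⟨(k - d).toNat, by omega⟩
    rw [hge, coeff_single_mul_coe_add]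

lemma coeff_FH_of_lt (H : PowerSeries R) {k : ℤ} (h : k < -1) : (FH H).coeff k = 0 :=
  coeff_single_mul_coe_of_lt 1 H h

lemma coeff_FH_natCast_sub_one (H : PowerSeries R) (n : ℕ) :
    (FH H).coeff (n - 1) = PowerSeries.coeff n H := by
  rw [FH, sub_eq_neg_add, coeff_single_mul_coe_add, one_mul]

lemma zscale_FH (H : PowerSeries R) {a : R} (ha : a ≠ 0) :
    zscale a (FH H)
      = HahnSeries.single (-1) a⁻¹ * (PowerSeries.rescale a H : LaurentSeries R) := by
  refine eq_single_mul_coe (fun k hk => by rw [coeff_zscale, coeff_FH_of_lt H hk, mul_zero])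
    fun n => ?_
  rw [coeff_zscale, ← sub_eq_neg_add, coeff_FH_natCast_sub_one, PowerSeries.coeff_rescale,
    zpow_sub_one₀ ha, zpow_natCast]
  ring

lemma FH_eq_single_mul_coe (H : PowerSeries R) :
    FH H
      = HahnSeries.single (-2) 1 * ((PowerSeries.X * H : PowerSeries R) : LaurentSeries R) := by
  rw [FH, PowerSeries.coe_mul, HahnSeries.ofPowerSeries_X, ← mul_assoc,
    HahnSeries.single_mul_single]
  norm_num

lemma FH_sq (H : PowerSeries R) :
    FH H ^ 2 = HahnSeries.single (-2) 1 * ((H ^ 2 : PowerSeries R) : LaurentSeries R) := by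
  rw [FH, mul_pow, HahnSeries.single_pow, ← map_pow]
  norm_num

lemma lderiv_FH (H : PowerSeries R) :
    lderiv (FH H) = HahnSeries.single (-2) 1 *
      ((PowerSeries.X * PowerSeries.derivative R H - H : PowerSeries R) : LaurentSeries R) := by
  refine eq_single_mul_coe (fun k hk => ?_) fun n => ?_
  · rw [coeff_lderiv, coeff_FH_of_lt H (by omega), mul_zero]
  · rw [coeff_lderiv, show -2 + (n : ℤ) + 1 = (n : ℤ) - 1 by ring, coeff_FH_natCast_sub_one,
      map_sub]
    rcases n with _ | n
    · simp
    · rw [PowerSeries.coeff_succ_X_mul, PowerSeries.coeff_derivative]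
      push_cast
      ring

lemma coeff_zscale_FH_mul_zscale_FH (H : PowerSeries R) {a b : R} (ha : a ≠ 0) (hb : b ≠ 0)
    (n : ℕ) :
    (zscale a (FH H) * zscale b (FH H)).coeff (n - 2) = a⁻¹ * b⁻¹ *
      ∑ p ∈ antidiagonal n,
        a ^ p.1 * b ^ p.2 * (PowerSeries.coeff p.1 H * PowerSeries.coeff p.2 H) := by
  rw [zscale_FH H ha, zscale_FH H hb, mul_mul_mul_comm, HahnSeries.single_mul_single,
    ← PowerSeries.coe_mul, show (n : ℤ) - 2 = -1 + -1 + n by ring, coeff_single_mul_coe_add,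
    PowerSeries.coeff_mul]
  congr 1
  refine sum_congr rfl fun p _ => ?_
  rw [PowerSeries.coeff_rescale, PowerSeries.coeff_rescale]
  ring

lemma SH_fin_two (H : PowerSeries R) (a b : ℤ) :
    SH H ![a, b] = zscale ((b - a : ℤ) : R) (FH H) + zscale ((a - b : ℤ) : R) (FH H) := by
  simp [SH, Fin.sum_univ_two, show univ.erase (0 : Fin 2) = {1} by decide,
    show univ.erase (1 : Fin 2) = {0} by decide]

lemma SH_fin_three (H : PowerSeries R) (a b c : ℤ) :
    SH H ![a, b, c] =
      zscale ((b - a : ℤ) : R) (FH H) * zscale ((c - a : ℤ) : R) (FH H)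
      + zscale ((a - b : ℤ) : R) (FH H) * zscale ((c - b : ℤ) : R) (FH H)
      + zscale ((a - c : ℤ) : R) (FH H) * zscale ((b - c : ℤ) : R) (FH H) := by
  simp [SH, Fin.sum_univ_three, show univ.erase (0 : Fin 3) = {1, 2} by decide,
    show univ.erase (1 : Fin 3) = {0, 2} by decide, show univ.erase (2 : Fin 3) = {0, 1} by decide]

lemma AlgRigid.mono {H : PowerSeries R} {m n : ℕ} (h : AlgRigid H n) (hmn : m ≤ n) :
    AlgRigid H m :=
  fun k hk hkm => h k hk (hkm.trans hmn)

lemma AlgRigid.coeff_eq_zero_of_odd [CharZero R] {H : PowerSeries R} (h : AlgRigid H 1)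
    {n : ℕ} (hn : Odd n) (hn1 : n ≠ 1) : PowerSeries.coeff n H = 0 := by
  have hinj : Function.Injective ![(0 : ℤ), 1] := by decide
  have hS := h 1 le_rfl le_rfl _ hinj (n - 1) (by omega)
  have heven : Even ((n : ℤ) - 1) := by
    obtain ⟨m, rfl⟩ := hn
    exact ⟨m, by push_cast; ring⟩
  rw [SH_fin_two, HahnSeries.coeff_add, coeff_zscale, coeff_zscale, coeff_FH_natCast_sub_one] at hS
  norm_num [heven.neg_one_zpow] at hS
  exact hS

/-- `x (x + 1)` times the coefficient of `t^(n-2)` in `S_H(0, x, x + 1; t)`, as a polynomial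
in `x`. -/
def sh3Poly (H : PowerSeries R) (n : ℕ) : R[X] :=
  ∑ p ∈ antidiagonal n, C (PowerSeries.coeff p.1 H * PowerSeries.coeff p.2 H) *
    (X ^ p.1 * (X + 1) ^ p.2 - (X + 1) * (-X) ^ p.1 + C ((-1) ^ n) * X * (X + 1) ^ p.1)

lemma eval_sh3Poly (H : PowerSeries R) (n : ℕ) {x : R} (hx : x ≠ 0) (hx1 : x + 1 ≠ 0) :
    (sh3Poly H n).eval x = x * (x + 1) *
      (zscale x (FH H) * zscale (x + 1) (FH H) + zscale (-x) (FH H) * zscale 1 (FH H)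
        + zscale (-(x + 1)) (FH H) * zscale (-1) (FH H)).coeff (n - 2) := by
  rw [HahnSeries.coeff_add, HahnSeries.coeff_add,
    coeff_zscale_FH_mul_zscale_FH H hx hx1,
    coeff_zscale_FH_mul_zscale_FH H (neg_ne_zero.2 hx) one_ne_zero,
    coeff_zscale_FH_mul_zscale_FH H (neg_ne_zero.2 hx1) (neg_ne_zero.2 one_ne_zero),
    sh3Poly, eval_finsetSum, mul_sum, mul_sum, mul_sum, ← sum_add_distrib, ← sum_add_distrib,
    mul_sum]
  refine sum_congr rfl fun p hp => ?_
  have hsign : (-1 : R) ^ p.1 * (-1) ^ p.2 = (-1) ^ n := by rw [← pow_add, mem_antidiagonal.1 hp]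
  simp only [eval_mul, eval_add, eval_sub, eval_neg, eval_pow, eval_C, eval_X, eval_one,
    neg_pow x, neg_pow (x + 1), one_pow]
  field_simp
  linear_combination
    (-x * (x + 1) ^ p.1 * PowerSeries.coeff p.1 H * PowerSeries.coeff p.2 H) * hsign

lemma AlgRigid.eval_sh3Poly_natCast_succ [CharZero R] {H : PowerSeries R} (h : AlgRigid H 2)
    {n : ℕ} (hn : n ≠ 2) (u : ℕ) : (sh3Poly H n).eval ((u + 1 : ℕ) : R) = 0 := by
  set a : ℤ := ((u + 1 : ℕ) : ℤ)
  have hinj : Function.Injective ![0, a, a + 1] := by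
    intro i j hij
    fin_cases i <;> fin_cases j <;> simp_all [a] <;> omega
  have hS := h 2 one_le_two le_rfl _ hinj (n - 2) (by omega)
  rw [SH_fin_three] at hS
  simp only [sub_zero, zero_sub, add_sub_cancel_left, sub_add_cancel_left, Int.cast_neg,
    Int.cast_add, Int.cast_one] at hS
  have ha : (a : R) = ((u + 1 : ℕ) : R) := Int.cast_natCast _
  rw [← ha, eval_sh3Poly H n (by rw [ha]; exact_mod_cast u.succ_ne_zero)
    (by rw [ha]; exact_mod_cast (u + 1).succ_ne_zero), hS, mul_zero]

lemma AlgRigid.sh3Poly_eq_zero [CharZero R] {H : PowerSeries R} (h : AlgRigid H 2) {n : ℕ}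
    (hn : n ≠ 2) : sh3Poly H n = 0 := by
  have hinj : Function.Injective fun u : ℕ => ((u + 1 : ℕ) : R) :=
    Nat.cast_injective.comp Nat.succ_injective
  refine eq_zero_of_infinite_isRoot _ <| (Set.infinite_range_of_injective hinj).mono ?_
  rintro _ ⟨u, rfl⟩
  exact h.eval_sh3Poly_natCast_succ hn u

lemma coeff_sh3Poly_self (H : PowerSeries R) {n : ℕ} (hn : 1 ≤ n) :
    (sh3Poly H n).coeff n = PowerSeries.coeff n (H ^ 2) + (-1) ^ n *
      ((n - 1) * PowerSeries.coeff n H * PowerSeries.coeff 0 H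
        + 2 * PowerSeries.coeff (n - 1) H * PowerSeries.coeff 1 H) := by
  set r : ℕ → R := fun i => PowerSeries.coeff i H
  set g : ℕ → R := fun i => (-1) ^ n * (i.choose (n - 1) : R) -
    (-1) ^ i * ((if n = i + 1 then 1 else 0) + if n = i then 1 else 0)
  have hterm : ∀ p ∈ antidiagonal n, (C (r p.1 * r p.2) * (X ^ p.1 * (X + 1) ^ p.2
      - (X + 1) * (-X) ^ p.1 + C ((-1) ^ n) * X * (X + 1) ^ p.1)).coeff n
        = r p.1 * r p.2 + r p.1 * r p.2 * g p.1 := by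
    rintro ⟨i, j⟩ hij
    simp only [HasAntidiagonal.mem_antidiagonal] at hij
    have h1 : (X ^ i * (X + 1) ^ j : R[X]).coeff n = 1 := by
      rw [show n = j + i by omega, coeff_X_pow_mul, coeff_X_add_one_pow, Nat.choose_self,
        Nat.cast_one]
    have h2 : ((X + 1) * (-X) ^ i : R[X]) = C ((-1) ^ i) * (X ^ (i + 1) + X ^ i) := by
      rw [neg_pow, map_pow, map_neg, map_one]
      ring
    have h3 : (X * (X + 1) ^ i : R[X]).coeff n = i.choose (n - 1) := by
      conv_lhs => rw [← Nat.sub_add_cancel hn]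
      rw [coeff_X_mul, coeff_X_add_one_pow]
    rw [mul_assoc (C _), coeff_C_mul, coeff_add, coeff_sub, h1, h2, coeff_C_mul, coeff_C_mul,
      h3, coeff_add, coeff_X_pow, coeff_X_pow]
    ring
  have hcorr : ∑ p ∈ antidiagonal n, r p.1 * r p.2 * g p.1
      = r (n - 1) * r 1 * g (n - 1) + r n * r 0 * g n := by
    refine sum_eq_add (f := fun p : ℕ × ℕ => r p.1 * r p.2 * g p.1) (n - 1, 1) (n, 0)
      (by simp) (fun ⟨i, j⟩ hij hne => ?_) (by simp; omega) (by simp)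
    simp only [HasAntidiagonal.mem_antidiagonal, ne_eq, Prod.mk.injEq] at hij hne
    simp [g, Nat.choose_eq_zero_of_lt (show i < n - 1 by omega), show n ≠ i + 1 by omega,
      show n ≠ i by omega]
  obtain ⟨k, rfl⟩ := Nat.exists_eq_add_of_le' hn
  rw [sh3Poly, finsetSum_coeff, sum_congr rfl hterm, sum_add_distrib, hcorr, sq,
    PowerSeries.coeff_mul]
  simp [r, g]
  ring

lemma AlgRigid.coeff_riccati [CharZero R] {H : PowerSeries R} (h : AlgRigid H 2)
    (hH : PowerSeries.constantCoeff H = 1) {n : ℕ} (hn : 3 ≤ n) :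
    (n - 1) * PowerSeries.coeff n H
      = -PowerSeries.coeff n (H ^ 2) + 2 * PowerSeries.coeff 1 H * PowerSeries.coeff (n - 1) H := by
  have hrel := coeff_sh3Poly_self H (n := n) (by omega)
  rw [h.sh3Poly_eq_zero (by omega), coeff_zero, PowerSeries.coeff_zero_eq_constantCoeff, hH]
    at hrel
  rcases n.even_or_odd with hev | hodd
  · have hodd' : PowerSeries.coeff (n - 1) H = 0 :=
      (h.mono one_le_two).coeff_eq_zero_of_odd (Nat.Even.sub_odd (by omega) hev odd_one) (by omega)
    rw [hev.neg_one_pow, hodd'] at hrel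
    rw [hodd']
    linear_combination -hrel
  · have hzero : PowerSeries.coeff n H = 0 :=
      (h.mono one_le_two).coeff_eq_zero_of_odd hodd (by omega)
    rw [hodd.neg_one_pow, hzero] at hrel
    rw [hzero]
    linear_combination -hrel

lemma AlgRigid.riccati_powerSeries [CharZero R] {H : PowerSeries R} (h : AlgRigid H 2)
    (hH : PowerSeries.constantCoeff H = 1) :
    PowerSeries.X * PowerSeries.derivative R H - H
      = -H ^ 2 + PowerSeries.C (PowerSeries.coeff 1 (H ^ 2)) * (PowerSeries.X * H)
        + PowerSeries.C (PowerSeries.coeff 2 (H ^ 3) - PowerSeries.coeff 1 (H ^ 2) ^ 2)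
          * PowerSeries.X ^ 2 := by
  ext n
  rcases n with _ | _ | _ | n
  · simp [hH]
  all_goals simp only [map_sub, map_add, map_neg, PowerSeries.coeff_succ_X_mul,
    PowerSeries.coeff_C_mul, PowerSeries.coeff_derivative]
  · simp [hH, pow_succ, PowerSeries.coeff_mul, Finset.Nat.antidiagonal_succ]
  · simp [hH, pow_succ, PowerSeries.coeff_mul, Finset.Nat.antidiagonal_succ, PowerSeries.coeff_X]
    ring
  · have h1 : PowerSeries.coeff 1 (H ^ 2) = 2 * PowerSeries.coeff 1 H := by
      simp [hH, sq, PowerSeries.coeff_mul, Finset.Nat.antidiagonal_succ]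
      ring
    rw [← map_sub, PowerSeries.coeff_C_mul_X_pow, if_neg (by omega), h1]
    have := h.coeff_riccati hH (n := n + 3) (by omega)
    push_cast at this ⊢
    linear_combination this

/-- if `H = 1 + r₁t + ⋯` is 2-algebraically rigid, then `F_H` satisfies
the Riccati equation `F_H′ = −F_H² + h₁·F_H + (h₂ − h₁²)`, with `h₁ = [H²]₁`, `h₂ = [H³]₂`. -/
theorem FH_riccati_of_algRigid_two {R : Type*} [Field R] [CharZero R]
    (H : PowerSeries R) (hH : PowerSeries.constantCoeff H = 1)
    (hrig : AlgRigid H 2) :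
    lderiv (FH H)
      = -(FH H ^ 2)
        + (HahnSeries.C (PowerSeries.coeff 1 (H ^ 2)) : LaurentSeries R) * FH H
        + (HahnSeries.C (PowerSeries.coeff 2 (H ^ 3)
            - (PowerSeries.coeff 1 (H ^ 2)) ^ 2) : LaurentSeries R) := by
  set c := PowerSeries.coeff 2 (H ^ 3) - PowerSeries.coeff 1 (H ^ 2) ^ 2
  have hX2 : HahnSeries.single (-2) 1 * ((PowerSeries.X ^ 2 : PowerSeries R) : LaurentSeries R)
      = 1 := by
    rw [HahnSeries.ofPowerSeries_X_pow, HahnSeries.single_mul_single]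
    simp
  rw [lderiv_FH, hrig.riccati_powerSeries hH, FH_sq, FH_eq_single_mul_coe, ← PowerSeries.coe_C,
    ← PowerSeries.coe_C]
  push_cast at hX2 ⊢
  linear_combination ((PowerSeries.C c : PowerSeries R) : LaurentSeries R) * hX2

end RigidGenus
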